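/- (Associativity of cut on projects) For projects a_1 = (a_1,A_1), a_2 = (a_2,A_2), a_3 = (a_3,A_3) with the intersection of the three carriers empty and all cuts defined, (a_1 ⊗ a_2) ∷ a_3 = (a_1 ∷ a_3) ∷ a_2, where both sides have underlying graph (A_1∪A_2)∷A_3 = (A_1∷A_3)∷A_2 and wager a_1+a_2+a_3+⟪A_1,A_3⟫+⟪A_1∷A_3, A_2⟫. -/

import Mathlib

open scoped ENNReal

/-- A directed weighted graph with a definite (finite) set of vertex locations. -/
structure EGraph (V : Type) where
  verts : Finset V
  E : Type
  src : E → V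
  tgt : E → V
  w : E → ℝ≥0∞
  src_mem : ∀ e, src e ∈ verts
  tgt_mem : ∀ e, tgt e ∈ verts

namespace EGraph

variable {V : Type} [DecidableEq V]

/-- source of an edge of the plugging `G □ H` -/
def psrc (G H : EGraph V) : G.E ⊕ H.E → V := Sum.elim G.src H.src

/-- target of an edge of the plugging `G □ H` -/
def ptgt (G H : EGraph V) : G.E ⊕ H.E → V := Sum.elim G.tgt H.tgt

/-- weight of an edge of the plugging `G □ H` -/
def pw (G H : EGraph V) : G.E ⊕ H.E → ℝ≥0∞ := Sum.elim G.w H.w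

/-- An alternating path in the plugging `G □ H`: a nonempty composable sequence of
colored edges whose consecutive edges have distinct colors. -/
structure AltPath (G H : EGraph V) where
  edges : List (G.E ⊕ H.E)
  ne : edges ≠ []
  chain : edges.Chain' (fun e f => ptgt G H e = psrc G H f ∧ e.isLeft ≠ f.isLeft)

variable {G H : EGraph V}

def AltPath.src (p : AltPath G H) : V := psrc G H (p.edges.head p.ne)
def AltPath.tgt (p : AltPath G H) : V := ptgt G H (p.edges.getLast p.ne)

noncomputable def AltPath.weight (p : AltPath G H) : ℝ≥0∞ :=
  (p.edges.map (pw G H)).prod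

/-- An alternating cycle: the target of the last edge is the source of the first one,
and moreover the colors of the last and first edges differ. -/
def AltPath.IsCycle (p : AltPath G H) : Prop :=
  p.tgt = p.src ∧ (p.edges.getLast p.ne).isLeft ≠ (p.edges.head p.ne).isLeft

/-- A list is primitive (a `1`-cycle) when it is not a proper power of a shorter list. -/
def PrimitiveList {α : Type*} (l : List α) : Prop :=
  ∀ (k : ℕ) (r : List α), l = (List.replicate k r).flatten → k = 1

def AltPath.IsOneCycle (p : AltPath G H) : Prop := p.IsCycle ∧ PrimitiveList p.edges

/-- Equivalence of alternating 1-cycles up to cyclic permutation. -/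
def cycSetoid (G H : EGraph V) : Setoid {p : AltPath G H // p.IsOneCycle} where
  r p q := ∃ k, q.1.edges = p.1.edges.rotate k
  iseqv := by
    constructor
    · exact fun p => ⟨0, (p.1.edges.rotate_zero).symm⟩
    · rintro p q ⟨k, hk⟩
      refine ⟨p.1.edges.length * (k + 1) - k, ?_⟩
      rw [hk, List.rotate_rotate]
      rcases Nat.eq_zero_or_pos p.1.edges.length with h0 | hpos
      · rw [List.length_eq_zero_iff] at h0
        simp [h0]
      · have hkle : k ≤ p.1.edges.length * (k + 1) := by nlinarith
        rw [Nat.add_sub_cancel' hkle, List.rotate_length_mul]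
    · rintro p q r ⟨k, hk⟩ ⟨m, hm⟩
      exact ⟨k + m, by rw [hm, hk, List.rotate_rotate]⟩

/-- The set of alternating 1-circuits between `G` and `H`: alternating 1-cycles up to
cyclic permutation. -/
def Circ (G H : EGraph V) := Quotient (cycSetoid G H)

/-- The weight of a circuit. -/
noncomputable def cweight {G H : EGraph V} : Circ G H → ℝ≥0∞ :=
  Quotient.lift (fun p => p.1.weight)
    (by
      rintro p q ⟨k, hk⟩
      show p.1.weight = q.1.weight
      unfold AltPath.weight
      rw [hk]
      exact (((p.1.edges.map (pw G H)).rotate_perm k).prod_eq).symm.trans (by rw [List.map_rotate]))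

/-- `-log(1-x)`, valued in `[0,∞]`, with the convention `log 0 = -∞`. -/
noncomputable def mval (x : ℝ≥0∞) : ℝ≥0∞ :=
  if 1 ≤ x then ⊤ else ENNReal.ofReal (-Real.log (1 - x.toReal))

/-- The measurement `⟪G,H⟫ = Σ_{π ∈ C(G,H)} -log(1-ω(π))`. -/
noncomputable def meas (G H : EGraph V) : ℝ≥0∞ := ∑' c : Circ G H, mval (cweight c)

/-- The extended measurement value `Σ_{k ≥ 1} x^k / k`. -/
noncomputable def mvalExt (x : ℝ≥0∞) : ℝ≥0∞ := ∑' k : ℕ, x ^ (k + 1) / (k + 1)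

/-- The measurement extended to arbitrary weights. -/
noncomputable def measExt (G H : EGraph V) : ℝ≥0∞ := ∑' c : Circ G H, mvalExt (cweight c)

/-- The union of two graphs: union of the vertices, disjoint union of the edges. -/
def union (G H : EGraph V) : EGraph V where
  verts := G.verts ∪ H.verts
  E := G.E ⊕ H.E
  src := psrc G H
  tgt := ptgt G H
  w := pw G H
  src_mem := by
    rintro (e | e)
    · exact Finset.mem_union_left _ (G.src_mem e)
    · exact Finset.mem_union_right _ (H.src_mem e)
  tgt_mem := by
    rintro (e | e)
    · exact Finset.mem_union_left _ (G.tgt_mem e)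
    · exact Finset.mem_union_right _ (H.tgt_mem e)

/-- The reduction `G ∷ H`: vertices the symmetric difference, edges the alternating
paths with endpoints in the symmetric difference, weighted multiplicatively. -/
noncomputable def reduct (G H : EGraph V) : EGraph V where
  verts := symmDiff G.verts H.verts
  E := {p : AltPath G H //
        p.src ∈ symmDiff G.verts H.verts ∧ p.tgt ∈ symmDiff G.verts H.verts}
  src := fun p => p.1.src
  tgt := fun p => p.1.tgt
  w := fun p => p.1.weight
  src_mem := fun p => p.2.1
  tgt_mem := fun p => p.2.2

/-- The collapsed (simple) graph `Ĝ`, with weights the sums of the weights of parallel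
edges. -/
noncomputable def adj (G : EGraph V) (v u : V) : ℝ≥0∞ :=
  ∑' e : {e : G.E // G.src e = v ∧ G.tgt e = u}, G.w e.1

noncomputable def collapse (G : EGraph V) : EGraph V where
  verts := G.verts
  E := {p : V × V // ∃ e : G.E, G.src e = p.1 ∧ G.tgt e = p.2}
  src := fun p => p.1.1
  tgt := fun p => p.1.2
  w := fun p => adj G p.1.1 p.1.2
  src_mem := fun p => by obtain ⟨e, he, _⟩ := p.2; show p.1.1 ∈ G.verts; rw [← he]; exact G.src_mem e
  tgt_mem := fun p => by obtain ⟨e, _, he⟩ := p.2; show p.1.2 ∈ G.verts; rw [← he]; exact G.tgt_mem e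

end EGraph

open EGraph

variable {V : Type} [DecidableEq V]

private lemma list_prod_pos {l : List ℝ≥0∞} (h : ∀ x ∈ l, 0 < x) : 0 < l.prod := by
  induction l with
  | nil => simp
  | cons a t ih =>
    rw [List.prod_cons]
    exact ENNReal.mul_pos (h a List.mem_cons_self).ne'
      (ih fun x hx => h x (List.mem_cons_of_mem _ hx)).ne'

private lemma list_prod_le_one {l : List ℝ≥0∞} (h : ∀ x ∈ l, x ≤ 1) : l.prod ≤ 1 := by
  induction l with
  | nil => simp
  | cons a t ih =>
    rw [List.prod_cons]
    exact mul_le_one' (h a List.mem_cons_self)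
      (ih fun x hx => h x (List.mem_cons_of_mem _ hx))

/-- A project: a wager together with a weighted directed graph whose weights lie in
`(0,1]`. -/
structure Project (V : Type) where
  wager : ℝ≥0∞
  graph : EGraph V
  wpos : ∀ e, 0 < graph.w e
  wle : ∀ e, graph.w e ≤ 1

namespace Project

def carrier (p : Project V) : Finset V := p.graph.verts

/-- The measurement `⟪a,b⟫ = a + b + ⟪A,B⟫` of the interaction of two projects. -/
noncomputable def pmeas (p q : Project V) : ℝ≥0∞ := p.wager + q.wager + meas p.graph q.graph

/-- Orthogonality: the measurement is neither `0` nor `∞`. -/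
def orth (p q : Project V) : Prop := pmeas p q ≠ 0 ∧ pmeas p q ≠ ⊤

/-- Tensor product of projects. -/
noncomputable def tensor (p q : Project V) : Project V where
  wager := pmeas p q
  graph := union p.graph q.graph
  wpos := by rintro (e | e); exacts [p.wpos e, q.wpos e]
  wle := by rintro (e | e); exacts [p.wle e, q.wle e]

/-- The cut of two projects (meaningful when `⟪p,q⟫ ≠ ∞`). -/
noncomputable def cut (p q : Project V) : Project V where
  wager := pmeas p q
  graph := reduct p.graph q.graph
  wpos := by
    rintro ⟨e, -⟩
    refine list_prod_pos ?_
    intro x hx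
    obtain ⟨d, -, rfl⟩ := List.mem_map.1 hx
    rcases d with d | d
    exacts [p.wpos d, q.wpos d]
  wle := by
    rintro ⟨e, -⟩
    refine list_prod_le_one ?_
    intro x hx
    obtain ⟨d, -, rfl⟩ := List.mem_map.1 hx
    rcases d with d | d
    exacts [p.wle d, q.wle d]

end Project

open Project

/-- The orthogonal of a set of projects, relative to a carrier `X`. -/
def perpOn (X : Finset V) (S : Set (Project V)) : Set (Project V) :=
  {q | q.carrier = X ∧ ∀ p ∈ S, orth p q}

/-- A conduct of carrier `X`: a nonempty set of projects of carrier `X` equal to its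
biorthogonal. -/
structure IsConduct (X : Finset V) (S : Set (Project V)) : Prop where
  nonempty : S.Nonempty
  carrier_eq : ∀ p ∈ S, p.carrier = X
  biorth : S = perpOn X (perpOn X S)

/-- `A ⊙ B`: the set of tensor products of members. -/
def setTens (A B : Set (Project V)) : Set (Project V) :=
  {r | ∃ a ∈ A, ∃ b ∈ B, r = a.tensor b}

/-- The tensor product of conducts: `A ⊗ B = (A ⊙ B)^⊥⊥`. -/
def tensConduct (X Y : Finset V) (A B : Set (Project V)) : Set (Project V) :=
  perpOn (X ∪ Y) (perpOn (X ∪ Y) (setTens A B))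

/-- The linear implication `A ⊸ B = {f | ∀ a ∈ A, f ∷ a is defined and lies in B}`. -/
def limp (X Y : Finset V) (A B : Set (Project V)) : Set (Project V) :=
  {f | f.carrier = X ∪ Y ∧ ∀ a ∈ A, pmeas f a ≠ ⊤ ∧ f.cut a ∈ B}

/-- The trace of (the collapse of) a graph. -/
noncomputable def gtrace (G : EGraph V) : ℝ≥0∞ := ∑ v ∈ G.verts, adj G v v

/-- The collapsed graph `Ĝ` is symmetric. -/
def SymmAdj (G : EGraph V) : Prop := ∀ v u, adj G v u = adj G u v

/-- `Ĝ³ = Ĝ`: the (adjacency matrix of the) graph of paths of length 3 in `Ĝ`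
coincides with `Ĝ`. -/
def CubeAdj (G : EGraph V) : Prop :=
  ∀ v u, (∑ u₁ ∈ G.verts, ∑ u₂ ∈ G.verts, adj G v u₁ * adj G u₁ u₂ * adj G u₂ u) = adj G v u

/-- A successful project: zero wager, collapsed graph symmetric, cube-idempotent and
traceless. -/
def Successful (p : Project V) : Prop :=
  p.wager = 0 ∧ SymmAdj p.graph ∧ CubeAdj p.graph ∧ gtrace p.graph = 0

/-- The collapsed graph is a disjoint union of weight-1 transpositions. -/
def IsDUT (G : EGraph V) : Prop :=
  (∀ v u, adj G v u ≠ 0 → adj G v u = 1) ∧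
  (∀ v u, adj G v u = adj G u v) ∧
  (∀ v u u', adj G v u ≠ 0 → adj G v u' ≠ 0 → u = u') ∧
  (∀ v v' u, adj G v u ≠ 0 → adj G v' u ≠ 0 → v = v') ∧
  (∀ v, adj G v v = 0)

/-- Isomorphism of located graphs: same vertices, and a weight- and endpoint-preserving
bijection of the edges. -/
def EGraph.IsIso (G H : EGraph V) : Prop :=
  G.verts = H.verts ∧ ∃ e : G.E ≃ H.E,
    (∀ x, H.src (e x) = G.src x) ∧ (∀ x, H.tgt (e x) = G.tgt x) ∧ (∀ x, H.w (e x) = G.w x)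

/-- Equality of projects up to graph isomorphism. -/
def Project.Equiv (p q : Project V) : Prop :=
  p.wager = q.wager ∧ EGraph.IsIso p.graph q.graph


/-!
Since `A₁` and `A₂` share no vertex, an alternating path of `(A₁ ∪ A₂) □ A₃` never passes
directly between an `A₁`-edge and an `A₂`-edge: next to each `A₂`-edge it uses an `A₃`-edge
whose endpoint lies in `A₂`, hence outside `A₁`. Cutting such a path at its `A₂`-edges
therefore leaves alternating paths of `A₁ □ A₃` with endpoints in `A₁ Δ A₃`, i.e. edges of
`A₁ ∷ A₃`, and the path is read as an alternating path of `(A₁ ∷ A₃) □ A₂`. This regrouping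
is a bijection preserving endpoints and weights, which gives the graph identity. On cycles
taken up to rotation, the same regrouping identifies the circuits of `(A₁ ∪ A₂) □ A₃` that
meet `A₂` with the circuits of `(A₁ ∷ A₃) □ A₂`, while those avoiding `A₂` are the circuits
of `A₁ □ A₃`; so `⟪A₁ ∪ A₂, A₃⟫ = ⟪A₁, A₃⟫ + ⟪A₁ ∷ A₃, A₂⟫`. Finally `⟪A₁, A₂⟫ = 0` because
disjoint graphs have no alternating cycles, and the wagers add up.
-/

namespace List

variable {α β : Type*} {l l' : List α}

theorem flatten_replicate_append_comm (x y : List α) (n : ℕ) :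
    (replicate n (x ++ y)).flatten ++ x = x ++ (replicate n (y ++ x)).flatten := by
  induction n with
  | zero => simp
  | succ n ih => simp only [replicate_succ, flatten_cons, append_assoc, ih]

theorem flatten_replicate_rotate (r : List α) (n k : ℕ) :
    (replicate n r).flatten.rotate k = (replicate n (r.rotate k)).flatten := by
  induction k generalizing r with
  | zero => simp
  | succ k ih =>
    rw [← rotate_rotate, ← rotate_rotate r, ih]
    generalize r.rotate k = r
    rcases r with _ | ⟨a, s⟩
    · simp
    rcases n with _ | n
    · simp
    have := flatten_replicate_append_comm [a] s n
    simp only [singleton_append] at this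
    simp [replicate_succ, rotate_cons_succ, this]

theorem flatMap_flatten_replicate (f : α → List β) (r : List α) (n : ℕ) :
    (replicate n r).flatten.flatMap f = (replicate n (r.flatMap f)).flatten := by
  induction n with
  | zero => simp
  | succ n ih => simp [replicate_succ, ih]

theorem IsRotated.exists_append (h : l ~r l') : ∃ a b, l = a ++ b ∧ l' = b ++ a := by
  obtain ⟨n, rfl⟩ := h
  exact ⟨_, _, (take_append_drop (n % l.length) l).symm, rotate_eq_drop_append_take_mod⟩

theorem IsRotated.flatMap (h : l ~r l') (f : α → List β) : l.flatMap f ~r l'.flatMap f := by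
  obtain ⟨a, b, rfl, rfl⟩ := h.exists_append
  simpa using isRotated_append

theorem IsRotated.of_map {f : α → β} (hf : Function.Injective f) (h : l.map f ~r l'.map f) :
    l ~r l' := by
  obtain ⟨n, hn⟩ := h
  exact ⟨n, hf.list_map (by rw [map_rotate, hn])⟩

theorem exists_isRotated_cons_of_mem {x : α} (hx : x ∈ l) : ∃ t, l ~r x :: t := by
  obtain ⟨s, t, rfl⟩ := append_of_mem hx
  exact ⟨t ++ s, by simpa using isRotated_append (l := s) (l' := x :: t)⟩

theorem head_flatMap_of_ne_nil {f : α → List β} (hf : ∀ a, f a ≠ []) (hl : l ≠ [])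
    (h : l.flatMap f ≠ []) : (l.flatMap f).head h = (f (l.head hl)).head (hf _) := by
  cases l with
  | nil => exact absurd rfl hl
  | cons a l => simp [head_append_of_ne_nil (hf a)]

theorem getLast_flatMap_of_ne_nil {f : α → List β} (hf : ∀ a, f a ≠ []) (hl : l ≠ [])
    (h : l.flatMap f ≠ []) : (l.flatMap f).getLast h = (f (l.getLast hl)).getLast (hf _) := by
  induction l with
  | nil => exact absurd rfl hl
  | cons a l ih =>
    rcases eq_or_ne l [] with rfl | hl'
    · simp
    have h' : l.flatMap f ≠ [] := by simpa [hl'] using ⟨l.head hl', head_mem hl', hf _⟩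
    simp only [flatMap_cons, getLast_append_of_ne_nil _ h', ih hl' h', getLast_cons hl']

end List

namespace Cycle

theorem chain_coe_iff {α : Type*} {R : α → α → Prop} {l : List α} (hl : l ≠ []) :
    Cycle.Chain R l ↔ l.IsChain R ∧ R (l.getLast hl) (l.head hl) := by
  rw [chain_ne_nil R hl, List.isChain_cons, and_comm, List.head?_eq_some_head hl]
  simp

end Cycle

namespace EGraph

section PrimitiveList

variable {α β : Type*} {l l' : List α}

theorem PrimitiveList.of_isRotated (h : PrimitiveList l) (hr : l ~r l') : PrimitiveList l' := by
  intro k r hkr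
  obtain ⟨n, hn⟩ := hr.symm
  exact h k (r.rotate n) (by rw [← hn, hkr, List.flatten_replicate_rotate])

theorem PrimitiveList.of_flatMap {f : α → List β} (h : PrimitiveList (l.flatMap f)) :
    PrimitiveList l := fun k r hkr =>
  h k (r.flatMap f) (by rw [hkr, List.flatMap_flatten_replicate])

theorem PrimitiveList.of_map {f : α → β} (h : PrimitiveList (l.map f)) : PrimitiveList l :=
  of_flatMap (f := fun a => [f a]) (List.map_eq_flatMap ▸ h)

theorem PrimitiveList.map {f : α → β} (hf : Function.Injective f) (h : PrimitiveList l) :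
    PrimitiveList (l.map f) := by
  intro n r hnr
  rcases n with _ | n
  · exact h 0 [] (by simpa using hnr)
  have hr : r = (l.take r.length).map f := by
    obtain ⟨s, hs⟩ : r <+: l.map f :=
      ⟨(List.replicate n r).flatten, by rw [hnr, List.replicate_succ, List.flatten_cons]⟩
    rw [List.map_take, ← hs, List.take_left' rfl]
  rw [hr, ← List.map_replicate, ← List.map_flatten] at hnr
  exact h _ _ (hf.list_map hnr)

end PrimitiveList

section TwoGraphs

variable {V : Type}

def AltStep (G H : EGraph V) (e f : G.E ⊕ H.E) : Prop :=
  ptgt G H e = psrc G H f ∧ e.isLeft ≠ f.isLeft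

theorem AltPath.edges_injective {G H : EGraph V} :
    Function.Injective (AltPath.edges : AltPath G H → _) := by
  rintro ⟨_, _, _⟩ ⟨_, _, _⟩ rfl
  rfl

theorem AltPath.isChain {G H : EGraph V} (p : AltPath G H) :
    p.edges.IsChain (AltStep G H) :=
  p.chain

theorem AltPath.isCycle_iff {G H : EGraph V} (p : AltPath G H) :
    p.IsCycle ↔ Cycle.Chain (AltStep G H) p.edges := by
  rw [Cycle.chain_coe_iff p.ne]
  exact ⟨fun h => ⟨p.chain, h⟩, fun h => h.2⟩

theorem not_altStep_of_disjoint {G H : EGraph V} (hd : Disjoint G.verts H.verts)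
    (e f : G.E ⊕ H.E) : ¬ AltStep G H e f := by
  rintro ⟨hv, hc⟩
  rcases e with e | e <;> rcases f with f | f
  · exact hc rfl
  · exact Finset.disjoint_left.1 hd (G.tgt_mem e) ((show G.tgt e = H.src f from hv) ▸ H.src_mem f)
  · exact Finset.disjoint_left.1 hd (G.src_mem f) ((show H.tgt e = G.src f from hv) ▸ H.tgt_mem e)
  · exact hc rfl

theorem circ_mk_eq_iff {G H : EGraph V} (s t : {p : AltPath G H // p.IsOneCycle}) :
    (Quotient.mk (cycSetoid G H) s : Circ G H) = Quotient.mk _ t ↔ s.1.edges ~r t.1.edges :=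
  Quotient.eq.trans ⟨fun ⟨k, hk⟩ => ⟨k, hk.symm⟩, fun ⟨k, hk⟩ => ⟨k, hk.symm⟩⟩

theorem IsIso.of_bijective {G H : EGraph V} (hv : G.verts = H.verts) (f : H.E → G.E)
    (hf : Function.Bijective f) (hsrc : ∀ x, G.src (f x) = H.src x)
    (htgt : ∀ x, G.tgt (f x) = H.tgt x) (hw : ∀ x, G.w (f x) = H.w x) : G.IsIso H := by
  refine ⟨hv, (Equiv.ofBijective f hf).symm, fun x => ?_, fun x => ?_, fun x => ?_⟩ <;>
  · obtain ⟨y, rfl⟩ := hf.2 x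
    simp [hsrc, htgt, hw]

theorem meas_eq_zero_of_disjoint {G H : EGraph V} (hd : Disjoint G.verts H.verts) :
    meas G H = 0 := by
  have : IsEmpty (Circ G H) := ⟨fun c => c.ind fun ⟨p, hp, _⟩ =>
    not_altStep_of_disjoint hd _ _ hp⟩
  rw [meas, tsum_empty]

end TwoGraphs

section ThreeGraphs

variable {G₁ G₂ G₃ : EGraph V}

abbrev UnionLetter (G₁ G₂ G₃ : EGraph V) := (union G₁ G₂).E ⊕ G₃.E

abbrev ReductLetter (G₁ G₂ G₃ : EGraph V) := (reduct G₁ G₃).E ⊕ G₂.E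

def liftLetter : G₁.E ⊕ G₃.E → UnionLetter G₁ G₂ G₃ := Sum.map Sum.inl id

def isG₂ : UnionLetter G₁ G₂ G₃ → Bool
  | .inl (.inr _) => true
  | _ => false

theorem liftLetter_injective : Function.Injective (liftLetter : _ → UnionLetter G₁ G₂ G₃) :=
  Sum.map_injective.2 ⟨Sum.inl_injective, Function.injective_id⟩

@[simp] theorem isG₂_liftLetter (c : G₁.E ⊕ G₃.E) :
    isG₂ (liftLetter c : UnionLetter G₁ G₂ G₃) = false := by
  cases c <;> rfl

@[simp] theorem isLeft_liftLetter (c : G₁.E ⊕ G₃.E) :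
    (liftLetter c : UnionLetter G₁ G₂ G₃).isLeft = c.isLeft := by
  cases c <;> rfl

@[simp] theorem psrc_liftLetter (c : G₁.E ⊕ G₃.E) :
    psrc (union G₁ G₂) G₃ (liftLetter c) = psrc G₁ G₃ c := by
  cases c <;> rfl

@[simp] theorem ptgt_liftLetter (c : G₁.E ⊕ G₃.E) :
    ptgt (union G₁ G₂) G₃ (liftLetter c) = ptgt G₁ G₃ c := by
  cases c <;> rfl

@[simp] theorem pw_liftLetter (c : G₁.E ⊕ G₃.E) :
    pw (union G₁ G₂) G₃ (liftLetter c) = pw G₁ G₃ c := by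
  cases c <;> rfl

@[simp] theorem altStep_liftLetter_iff (c c' : G₁.E ⊕ G₃.E) :
    AltStep (union G₁ G₂) G₃ (liftLetter c) (liftLetter c') ↔ AltStep G₁ G₃ c c' := by
  simp [AltStep]

theorem exists_map_liftLetter_eq :
    ∀ {l : List (UnionLetter G₁ G₂ G₃)}, (∀ a ∈ l, isG₂ a = false) →
      ∃ r : List (G₁.E ⊕ G₃.E), r.map liftLetter = l
  | [], _ => ⟨[], rfl⟩
  | a :: l, h => by
    obtain ⟨r, hr⟩ := exists_map_liftLetter_eq fun b hb => h b (List.mem_cons_of_mem a hb)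
    have ha := h a List.mem_cons_self
    rcases a with (e | e) | e
    · exact ⟨.inl e :: r, by rw [List.map_cons, hr]; rfl⟩
    · simp [isG₂] at ha
    · exact ⟨.inr e :: r, by rw [List.map_cons, hr]; rfl⟩

theorem psrc_mem_union_of_not_isG₂ {a : UnionLetter G₁ G₂ G₃} (h : isG₂ a = false) :
    psrc (union G₁ G₂) G₃ a ∈ G₁.verts ∪ G₃.verts := by
  rcases a with (e | e) | e
  · exact Finset.mem_union_left _ (G₁.src_mem e)
  · simp [isG₂] at h
  · exact Finset.mem_union_right _ (G₃.src_mem e)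

theorem ptgt_mem_union_of_not_isG₂ {a : UnionLetter G₁ G₂ G₃} (h : isG₂ a = false) :
    ptgt (union G₁ G₂) G₃ a ∈ G₁.verts ∪ G₃.verts := by
  rcases a with (e | e) | e
  · exact Finset.mem_union_left _ (G₁.tgt_mem e)
  · simp [isG₂] at h
  · exact Finset.mem_union_right _ (G₃.tgt_mem e)

theorem altStep_isG₂_right (hd : Disjoint G₁.verts G₂.verts) {a b : UnionLetter G₁ G₂ G₃}
    (h : AltStep (union G₁ G₂) G₃ a b) (hb : isG₂ b) :
    isG₂ a = false ∧ ptgt (union G₁ G₂) G₃ a ∈ symmDiff G₁.verts G₃.verts := by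
  rcases b with (_ | e₂) | _ <;> simp only [isG₂, Bool.false_eq_true] at hb
  rcases a with (_ | _) | e₃
  · exact absurd rfl h.2
  · exact absurd rfl h.2
  · have hv : G₃.tgt e₃ = G₂.src e₂ := h.1
    exact ⟨rfl, Finset.mem_symmDiff.2 <| .inr
      ⟨G₃.tgt_mem e₃, fun h₁ => Finset.disjoint_left.1 hd h₁
        (show G₃.tgt e₃ ∈ G₂.verts from hv ▸ G₂.src_mem e₂)⟩⟩

theorem altStep_isG₂_left (hd : Disjoint G₁.verts G₂.verts) {a b : UnionLetter G₁ G₂ G₃}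
    (h : AltStep (union G₁ G₂) G₃ a b) (ha : isG₂ a) :
    isG₂ b = false ∧ psrc (union G₁ G₂) G₃ b ∈ symmDiff G₁.verts G₃.verts := by
  rcases a with (_ | e₂) | _ <;> simp only [isG₂, Bool.false_eq_true] at ha
  rcases b with (_ | _) | e₃
  · exact absurd rfl h.2
  · exact absurd rfl h.2
  · have hv : G₂.tgt e₂ = G₃.src e₃ := h.1
    exact ⟨rfl, Finset.mem_symmDiff.2 <| .inr
      ⟨G₃.src_mem e₃, fun h₁ => Finset.disjoint_left.1 hd h₁
        (show G₃.src e₃ ∈ G₂.verts from hv ▸ G₂.tgt_mem e₂)⟩⟩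

def expand : ReductLetter G₁ G₂ G₃ → List (UnionLetter G₁ G₂ G₃) :=
  Sum.elim (fun p => p.1.edges.map liftLetter) (fun e => [.inl (.inr e)])

@[simp] theorem expand_inl (p : (reduct G₁ G₃).E) :
    expand (.inl p : ReductLetter G₁ G₂ G₃) = p.1.edges.map liftLetter :=
  rfl

@[simp] theorem expand_inr (e : G₂.E) :
    expand (.inr e : ReductLetter G₁ G₂ G₃) = [.inl (.inr e)] :=
  rfl

theorem expand_ne_nil (b : ReductLetter G₁ G₂ G₃) : expand b ≠ [] := by
  rcases b with p | e
  · simpa using p.1.ne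
  · simp

theorem flatMap_expand_ne_nil {m : List (ReductLetter G₁ G₂ G₃)} (hm : m ≠ []) :
    m.flatMap expand ≠ [] := by
  cases m with
  | nil => exact absurd rfl hm
  | cons b m => simp [expand_ne_nil b]

theorem psrc_head_expand (b : ReductLetter G₁ G₂ G₃) :
    psrc (union G₁ G₂) G₃ ((expand b).head (expand_ne_nil b)) = psrc (reduct G₁ G₃) G₂ b := by
  rcases b with p | e
  · simp only [expand_inl, List.head_map, psrc_liftLetter]
    rfl
  · rfl

theorem ptgt_getLast_expand (b : ReductLetter G₁ G₂ G₃) :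
    ptgt (union G₁ G₂) G₃ ((expand b).getLast (expand_ne_nil b)) = ptgt (reduct G₁ G₃) G₂ b := by
  rcases b with p | e
  · simp only [expand_inl, List.getLast_map, ptgt_liftLetter]
    rfl
  · rfl

theorem isG₂_of_mem_expand {b : ReductLetter G₁ G₂ G₃} {a : UnionLetter G₁ G₂ G₃}
    (ha : a ∈ expand b) : isG₂ a = b.isRight := by
  rcases b with p | e
  · obtain ⟨c, -, rfl⟩ := List.mem_map.1 ha
    simp
  · rw [expand_inr, List.mem_singleton] at ha
    subst ha
    rfl

theorem isG₂_head_expand (b : ReductLetter G₁ G₂ G₃) :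
    isG₂ ((expand b).head (expand_ne_nil b)) = b.isRight :=
  isG₂_of_mem_expand (List.head_mem _)

theorem isG₂_getLast_expand (b : ReductLetter G₁ G₂ G₃) :
    isG₂ ((expand b).getLast (expand_ne_nil b)) = b.isRight :=
  isG₂_of_mem_expand (List.getLast_mem _)

theorem head_flatMap_expand {m : List (ReductLetter G₁ G₂ G₃)} (hm : m ≠ [])
    (h : m.flatMap expand ≠ []) :
    (m.flatMap expand).head h = (expand (m.head hm)).head (expand_ne_nil _) :=
  List.head_flatMap_of_ne_nil expand_ne_nil hm h

theorem getLast_flatMap_expand {m : List (ReductLetter G₁ G₂ G₃)} (hm : m ≠ [])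
    (h : m.flatMap expand ≠ []) :
    (m.flatMap expand).getLast h = (expand (m.getLast hm)).getLast (expand_ne_nil _) :=
  List.getLast_flatMap_of_ne_nil expand_ne_nil hm h

theorem prod_map_pw_flatMap_expand (m : List (ReductLetter G₁ G₂ G₃)) :
    ((m.flatMap expand).map (pw (union G₁ G₂) G₃)).prod = (m.map (pw (reduct G₁ G₃) G₂)).prod := by
  induction m with
  | nil => rfl
  | cons b m ih =>
    simp only [List.flatMap_cons, List.map_append, List.prod_append, ih, List.map_cons,
      List.prod_cons]
    congr 1
    rcases b with p | e
    · show ((p.1.edges.map liftLetter).map _).prod = p.1.weight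
      simp only [List.map_map, AltPath.weight]
      exact congrArg List.prod (List.map_congr_left fun c _ => pw_liftLetter c)
    · simp only [expand_inr, List.map_cons, List.map_nil, List.prod_singleton]
      rfl

theorem isChain_expand (b : ReductLetter G₁ G₂ G₃) :
    (expand b).IsChain (AltStep (union G₁ G₂) G₃) := by
  rcases b with p | e
  · simpa [List.isChain_map] using p.1.isChain
  · exact List.isChain_singleton _

theorem isLeft_eq_false_of_ptgt_mem (hd : Disjoint G₁.verts G₂.verts) {a : UnionLetter G₁ G₂ G₃}
    (ha : isG₂ a = false) (hv : ptgt (union G₁ G₂) G₃ a ∈ G₂.verts) : a.isLeft = false := by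
  rcases a with (e | e) | e
  · exact absurd hv (Finset.disjoint_left.1 hd (G₁.tgt_mem e))
  · simp [isG₂] at ha
  · rfl

theorem isLeft_eq_false_of_psrc_mem (hd : Disjoint G₁.verts G₂.verts) {a : UnionLetter G₁ G₂ G₃}
    (ha : isG₂ a = false) (hv : psrc (union G₁ G₂) G₃ a ∈ G₂.verts) : a.isLeft = false := by
  rcases a with (e | e) | e
  · exact absurd hv (Finset.disjoint_left.1 hd (G₁.src_mem e))
  · simp [isG₂] at ha
  · rfl

theorem altStep_getLast_expand_head_expand (hd : Disjoint G₁.verts G₂.verts)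
    {b b' : ReductLetter G₁ G₂ G₃} (h : AltStep (reduct G₁ G₃) G₂ b b') :
    AltStep (union G₁ G₂) G₃ ((expand b).getLast (expand_ne_nil b))
      ((expand b').head (expand_ne_nil b')) := by
  refine ⟨by rw [ptgt_getLast_expand, psrc_head_expand]; exact h.1, ?_⟩
  obtain ⟨hv, hc⟩ := h
  rcases b with p | e <;> rcases b' with p' | e'
  · exact absurd rfl hc
  · rw [isLeft_eq_false_of_ptgt_mem hd (by rw [isG₂_getLast_expand]; rfl)
      (by rw [ptgt_getLast_expand, hv]; exact G₂.src_mem e')]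
    exact Bool.false_ne_true
  · rw [isLeft_eq_false_of_psrc_mem hd (a := (expand (.inl p')).head (expand_ne_nil _))
      (by rw [isG₂_head_expand]; rfl) (by rw [psrc_head_expand, ← hv]; exact G₂.tgt_mem e)]
    exact Bool.false_ne_true.symm
  · exact absurd rfl hc

theorem altStep_of_altStep_expand {b b' : ReductLetter G₁ G₂ G₃}
    (h : AltStep (union G₁ G₂) G₃ ((expand b).getLast (expand_ne_nil b))
      ((expand b').head (expand_ne_nil b')))
    (hG₂ : isG₂ ((expand b).getLast (expand_ne_nil b)) ∨
      isG₂ ((expand b').head (expand_ne_nil b'))) :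
    AltStep (reduct G₁ G₃) G₂ b b' := by
  refine ⟨by rw [← ptgt_getLast_expand, ← psrc_head_expand]; exact h.1, fun hc => ?_⟩
  rcases b with p | e <;> rcases b' with p' | e'
  · simp at hG₂
  · exact absurd hc (by simp)
  · exact absurd hc (by simp)
  · exact h.2 rfl

theorem isChain_flatMap_expand (hd : Disjoint G₁.verts G₂.verts)
    {m : List (ReductLetter G₁ G₂ G₃)} (hm : m.IsChain (AltStep (reduct G₁ G₃) G₂)) :
    (m.flatMap expand).IsChain (AltStep (union G₁ G₂) G₃) := by
  rw [List.flatMap_def, List.isChain_flatten fun h => by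
    obtain ⟨b, -, hb⟩ := List.mem_map.1 h
    exact expand_ne_nil b hb]
  refine ⟨fun l hl => ?_, ?_⟩
  · obtain ⟨b, -, rfl⟩ := List.mem_map.1 hl
    exact isChain_expand b
  rw [List.isChain_map]
  refine hm.imp fun b b' hbb x hx y hy => ?_
  rw [List.getLast?_eq_some_getLast (expand_ne_nil b), Option.mem_some_iff] at hx
  rw [List.head?_eq_some_head (expand_ne_nil b'), Option.mem_some_iff] at hy
  subst hx hy
  exact altStep_getLast_expand_head_expand hd hbb

theorem cycleChain_flatMap_expand (hd : Disjoint G₁.verts G₂.verts)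
    {m : List (ReductLetter G₁ G₂ G₃)} (hm : Cycle.Chain (AltStep (reduct G₁ G₃) G₂) m) :
    Cycle.Chain (AltStep (union G₁ G₂) G₃) (m.flatMap expand : Cycle _) := by
  rcases eq_or_ne m [] with rfl | hne
  · exact Cycle.Chain.nil _
  rw [Cycle.chain_coe_iff hne] at hm
  rw [Cycle.chain_coe_iff (flatMap_expand_ne_nil hne), head_flatMap_expand hne,
    getLast_flatMap_expand hne]
  exact ⟨isChain_flatMap_expand hd hm.1, altStep_getLast_expand_head_expand hd hm.2⟩

theorem isChain_cons_of_flatMap_expand {b : ReductLetter G₁ G₂ G₃}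
    {m : List (ReductLetter G₁ G₂ G₃)}
    (hm : m.IsChain (AltStep (reduct G₁ G₃) G₂))
    (h : ((b :: m).flatMap expand).IsChain (AltStep (union G₁ G₂) G₃))
    (hG₂ : ∀ hm : m ≠ [], isG₂ ((expand b).getLast (expand_ne_nil b)) ∨
      isG₂ ((m.flatMap expand).head (flatMap_expand_ne_nil hm))) :
    (b :: m).IsChain (AltStep (reduct G₁ G₃) G₂) := by
  refine List.isChain_cons.2 ⟨fun b' hb' => ?_, hm⟩
  have hne : m ≠ [] := by rintro rfl; simp at hb'
  obtain rfl : m.head hne = b' :=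
    Option.some_injective _ ((List.head?_eq_some_head hne).symm.trans hb')
  rw [List.flatMap_cons, List.isChain_append] at h
  refine altStep_of_altStep_expand (h.2.2 _ (List.getLast?_eq_some_getLast _) _ ?_) ?_
  · rw [List.head?_eq_some_head (flatMap_expand_ne_nil hne), head_flatMap_expand hne]
    rfl
  · simpa only [head_flatMap_expand hne] using hG₂ hne

theorem head?_flatMap_expand_cons (b : ReductLetter G₁ G₂ G₃) (m : List (ReductLetter G₁ G₂ G₃)) :
    ((b :: m).flatMap expand).head? = some ((expand b).head (expand_ne_nil b)) := by
  rw [List.flatMap_cons, List.head?_append, List.head?_eq_some_head (expand_ne_nil b)]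
  rfl

theorem takeWhile_flatMap_expand_inl {p : (reduct G₁ G₃).E} {m : List (ReductLetter G₁ G₂ G₃)}
    (hm : (.inl p :: m).IsChain (AltStep (reduct G₁ G₃) G₂)) :
    ((.inl p :: m).flatMap expand).takeWhile (fun a => !isG₂ a) = p.1.edges.map liftLetter := by
  rw [List.flatMap_cons, expand_inl, List.takeWhile_append_of_pos fun a ha => by
    obtain ⟨c, -, rfl⟩ := List.mem_map.1 ha
    simp]
  rcases m with _ | ⟨_ | e, m⟩
  · simp
  · exact absurd rfl (List.isChain_cons_cons.1 hm).1.2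
  · simp [isG₂]

theorem eq_of_flatMap_expand_cons_eq {b₁ b₂ : ReductLetter G₁ G₂ G₃}
    {m₁ m₂ : List (ReductLetter G₁ G₂ G₃)} (h₁ : (b₁ :: m₁).IsChain (AltStep (reduct G₁ G₃) G₂))
    (h₂ : (b₂ :: m₂).IsChain (AltStep (reduct G₁ G₃) G₂))
    (h : (b₁ :: m₁).flatMap expand = (b₂ :: m₂).flatMap expand) : b₁ = b₂ := by
  have hR : b₁.isRight = b₂.isRight := by
    have := congrArg (fun l => l.head?.map isG₂) h
    simpa only [head?_flatMap_expand_cons, Option.map_some, isG₂_head_expand,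
      Option.some_inj] using this
  rcases b₁ with p₁ | e₁ <;> rcases b₂ with p₂ | e₂
  · have := (takeWhile_flatMap_expand_inl h₁).symm.trans (h ▸ takeWhile_flatMap_expand_inl h₂)
    exact congrArg _ (Subtype.ext (AltPath.edges_injective (liftLetter_injective.list_map this)))
  · simp at hR
  · simp at hR
  · simp only [List.flatMap_cons, expand_inr, List.singleton_append, List.cons.injEq] at h
    obtain ⟨he, -⟩ := h
    cases he
    rfl

theorem flatMap_expand_injective {m₁ m₂ : List (ReductLetter G₁ G₂ G₃)}
    (h₁ : m₁.IsChain (AltStep (reduct G₁ G₃) G₂)) (h₂ : m₂.IsChain (AltStep (reduct G₁ G₃) G₂))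
    (h : m₁.flatMap expand = m₂.flatMap expand) : m₁ = m₂ := by
  induction m₁ generalizing m₂ with
  | nil =>
    cases m₂ with
    | nil => rfl
    | cons b m => exact absurd h.symm (flatMap_expand_ne_nil (List.cons_ne_nil b m))
  | cons b₁ m₁ ih =>
    cases m₂ with
    | nil => exact absurd h (flatMap_expand_ne_nil (List.cons_ne_nil b₁ m₁))
    | cons b₂ m₂ =>
      obtain rfl := eq_of_flatMap_expand_cons_eq h₁ h₂ h
      rw [List.flatMap_cons, List.flatMap_cons, List.append_cancel_left_eq] at h
      rw [ih (m₂ := m₂) h₁.tail h₂.tail h]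

theorem exists_eq_append_of_flatMap_expand_eq_append {x y : List (UnionLetter G₁ G₂ G₃)}
    (hy : ∀ hy : y ≠ [], isG₂ (y.head hy)) {m : List (ReductLetter G₁ G₂ G₃)}
    (h : m.flatMap expand = x ++ y) :
    ∃ m₁ m₂, m = m₁ ++ m₂ ∧ m₁.flatMap expand = x ∧ m₂.flatMap expand = y := by
  induction m generalizing x with
  | nil =>
    obtain ⟨rfl, rfl⟩ := List.append_eq_nil_iff.1 h.symm
    exact ⟨[], [], rfl, rfl, rfl⟩
  | cons b m ih =>
    rcases eq_or_ne x [] with rfl | hx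
    · exact ⟨[], b :: m, rfl, rfl, h⟩
    rw [List.flatMap_cons, List.append_eq_append_iff] at h
    rcases h with ⟨a, rfl, ha⟩ | ⟨c, hc, rfl⟩
    · obtain ⟨m₁, m₂, rfl, h₁, h₂⟩ := ih ha
      exact ⟨b :: m₁, m₂, rfl, by simp [h₁], h₂⟩
    rcases eq_or_ne c [] with rfl | hc'
    · exact ⟨[b], m, rfl, by simpa using hc, by simp⟩
    -- a `G₂` letter inside `expand b` forces `expand b` to be that single letter
    exfalso
    have hG₂ := hy (by simp [hc'])
    rw [List.head_append_of_ne_nil hc'] at hG₂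
    rcases b with p | e
    · rw [isG₂_of_mem_expand (hc ▸ List.mem_append_right x (List.head_mem hc'))] at hG₂
      simp at hG₂
    · have := congrArg List.length hc
      simp only [expand_inr, List.length_singleton, List.length_append] at this
      have := List.length_pos_iff.2 hx
      have := List.length_pos_iff.2 hc'
      omega

theorem exists_isRotated_flatMap_expand_eq {m : List (ReductLetter G₁ G₂ G₃)}
    {l : List (UnionLetter G₁ G₂ G₃)} (h : m.flatMap expand ~r l)
    (hl : ∀ hl : l ≠ [], isG₂ (l.head hl)) : ∃ m', m ~r m' ∧ m'.flatMap expand = l := by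
  obtain ⟨x, y, hxy, rfl⟩ := h.exists_append
  have hy : ∀ hy : y ≠ [], isG₂ (y.head hy) := fun hy => by
    have := hl (by simp [hy])
    rwa [List.head_append_of_ne_nil hy] at this
  obtain ⟨m₁, m₂, rfl, h₁, h₂⟩ := exists_eq_append_of_flatMap_expand_eq_append hy hxy
  exact ⟨m₂ ++ m₁, List.isRotated_append, by simp [h₁, h₂]⟩

theorem exists_eq_flatten_replicate_of_flatMap_expand {r : List (UnionLetter G₁ G₂ G₃)}
    (hr : ∀ hr : r ≠ [], isG₂ (r.head hr)) (k : ℕ) {m : List (ReductLetter G₁ G₂ G₃)}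
    (hm : m.IsChain (AltStep (reduct G₁ G₃) G₂))
    (h : m.flatMap expand = (List.replicate (k + 1) r).flatten) :
    ∃ s, m = (List.replicate (k + 1) s).flatten ∧ s.flatMap expand = r := by
  induction k generalizing m with
  | zero => exact ⟨m, by simp, by simpa using h⟩
  | succ k ih =>
    have hy (hy : (List.replicate (k + 1) r).flatten ≠ []) :
        isG₂ ((List.replicate (k + 1) r).flatten.head hy) := by
      have hr' : r ≠ [] := by rintro rfl; simp at hy
      simpa [List.replicate_succ, List.head_append_of_ne_nil hr'] using hr hr'
    rw [List.replicate_succ, List.flatten_cons] at h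
    obtain ⟨m₁, m₂, rfl, h₁, h₂⟩ := exists_eq_append_of_flatMap_expand_eq_append hy h
    obtain ⟨s, rfl, hs⟩ := ih (hm.suffix (List.suffix_append _ _)) h₂
    have hs' : s.IsChain (AltStep (reduct G₁ G₃) G₂) :=
      (hm.suffix (List.suffix_append _ _)).prefix
        ⟨(List.replicate k s).flatten, by rw [List.replicate_succ, List.flatten_cons]⟩
    obtain rfl :=
      flatMap_expand_injective hs' (hm.prefix (List.prefix_append _ _)) (hs.trans h₁.symm)
    exact ⟨s, by rw [List.replicate_succ (n := k + 1), List.flatten_cons], hs⟩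

theorem exists_inr_mem_of_cycleChain {m : List (ReductLetter G₁ G₂ G₃)} (hm : m ≠ [])
    (hc : Cycle.Chain (AltStep (reduct G₁ G₃) G₂) m) : ∃ e, .inr e ∈ m := by
  by_contra! h
  have hl : ∀ b ∈ m, b.isLeft := fun b hb => by
    rcases b with p | e
    · rfl
    · exact absurd hb (h e)
  exact ((Cycle.chain_coe_iff hm).1 hc).2.2 <| by
    rw [hl _ (List.getLast_mem hm), hl _ (List.head_mem hm)]

theorem PrimitiveList.flatMap_expand {m : List (ReductLetter G₁ G₂ G₃)} (hm : m ≠ [])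
    (hc : Cycle.Chain (AltStep (reduct G₁ G₃) G₂) m) (h : PrimitiveList m) :
    PrimitiveList (m.flatMap expand) := by
  -- once `m` starts with a `G₂` edge, every root of its expansion regroups into a root of `m`
  obtain ⟨e, he⟩ := exists_inr_mem_of_cycleChain hm hc
  obtain ⟨t, ht⟩ := List.exists_isRotated_cons_of_mem he
  refine PrimitiveList.of_isRotated ?_ (ht.flatMap expand).symm
  have hct : (.inr e :: t).IsChain (AltStep (reduct G₁ G₃) G₂) :=
    ((Cycle.chain_coe_iff (List.cons_ne_nil _ _)).1 (Cycle.coe_eq_coe.2 ht ▸ hc)).1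
  intro k r hkr
  rcases k with _ | k
  · simp at hkr
  have hr : ∀ hr : r ≠ [], isG₂ (r.head hr) := fun hr => by
    have := congrArg List.head? hkr
    simp only [head?_flatMap_expand_cons, List.replicate_succ, List.flatten_cons,
      List.head?_append, List.head?_eq_some_head hr, Option.some_or, Option.some_inj] at this
    rw [← this]
    rfl
  obtain ⟨s, hs, -⟩ := exists_eq_flatten_replicate_of_flatMap_expand hr k hct hkr
  exact h.of_isRotated ht _ s hs

theorem exists_expand_inl_eq {u : List (UnionLetter G₁ G₂ G₃)} (hu : u ≠ [])
    (hfree : ∀ a ∈ u, isG₂ a = false) (hc : u.IsChain (AltStep (union G₁ G₂) G₃))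
    (hs : psrc (union G₁ G₂) G₃ (u.head hu) ∈ symmDiff G₁.verts G₃.verts)
    (ht : ptgt (union G₁ G₂) G₃ (u.getLast hu) ∈ symmDiff G₁.verts G₃.verts) :
    ∃ p : (reduct G₁ G₃).E, expand (.inl p : ReductLetter G₁ G₂ G₃) = u := by
  obtain ⟨r, rfl⟩ := exists_map_liftLetter_eq hfree
  have hr : r ≠ [] := by simpa using hu
  refine ⟨⟨⟨r, hr, (by simpa [List.isChain_map] using hc : r.IsChain (AltStep G₁ G₃))⟩, ?_, ?_⟩,
    rfl⟩
  · simpa [List.head_map, AltPath.src] using hs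
  · simpa [List.getLast_map, AltPath.tgt] using ht

theorem exists_expand_inl_eq_of_append (hd : Disjoint G₁.verts G₂.verts)
    {u v : List (UnionLetter G₁ G₂ G₃)} (hu : u ≠ []) (hfree : ∀ a ∈ u, isG₂ a = false)
    (hv : ∀ hv : v ≠ [], isG₂ (v.head hv)) (hc : (u ++ v).IsChain (AltStep (union G₁ G₂) G₃))
    (hs : psrc (union G₁ G₂) G₃ (u.head hu) ∈ symmDiff G₁.verts G₃.verts)
    (ht : v = [] → ptgt (union G₁ G₂) G₃ (u.getLast hu) ∈ symmDiff G₁.verts G₃.verts) :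
    ∃ p : (reduct G₁ G₃).E, expand (.inl p : ReductLetter G₁ G₂ G₃) = u := by
  rw [List.isChain_append] at hc
  refine exists_expand_inl_eq hu hfree hc.1 hs ?_
  rcases eq_or_ne v [] with hv' | hv'
  · exact ht hv'
  · exact (altStep_isG₂_right hd (hc.2.2 _ (List.getLast?_eq_some_getLast hu) _
      (List.head?_eq_some_head hv')) (hv hv')).2

theorem exists_expand_append (hd : Disjoint G₁.verts G₂.verts)
    {l : List (UnionLetter G₁ G₂ G₃)} (hl : l ≠ []) (hc : l.IsChain (AltStep (union G₁ G₂) G₃))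
    (hs : isG₂ (l.head hl) ∨ psrc (union G₁ G₂) G₃ (l.head hl) ∈ symmDiff G₁.verts G₃.verts)
    (ht : isG₂ (l.getLast hl) ∨
      ptgt (union G₁ G₂) G₃ (l.getLast hl) ∈ symmDiff G₁.verts G₃.verts) :
    ∃ b v, l = expand b ++ v ∧ ∀ hv : v ≠ [],
      (isG₂ ((expand b).getLast (expand_ne_nil b)) ∨ isG₂ (v.head hv)) ∧
      (isG₂ (v.head hv) ∨ psrc (union G₁ G₂) G₃ (v.head hv) ∈ symmDiff G₁.verts G₃.verts) := by
  by_cases h₂ : isG₂ (l.head hl)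
  · obtain ⟨a, t, rfl⟩ := List.exists_cons_of_ne_nil hl
    rcases a with (_ | e) | _ <;> simp only [isG₂, List.head_cons, Bool.false_eq_true] at h₂
    refine ⟨.inr e, t, rfl, fun ht' => ⟨.inl rfl, .inr ?_⟩⟩
    exact (altStep_isG₂_left hd ((List.isChain_cons.1 hc).1 _ (List.head?_eq_some_head ht'))
      rfl).2
  -- otherwise the first block is the longest prefix avoiding `G₂`
  obtain ⟨u, v, rfl, hfree, hv⟩ : ∃ u v, l = u ++ v ∧ (∀ a ∈ u, isG₂ a = false) ∧
      ∀ hv : v ≠ [], isG₂ (v.head hv) :=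
    ⟨l.takeWhile (fun a => !isG₂ a), l.dropWhile (fun a => !isG₂ a),
      List.takeWhile_append_dropWhile.symm, fun a ha => by simpa using List.mem_takeWhile_imp ha,
      fun hv => by simpa using List.head_dropWhile_not (fun a => !isG₂ a) hv⟩
  have hu : u ≠ [] := by
    rintro rfl
    exact h₂ (by simpa using hv (by simpa using hl))
  rw [List.head_append_of_ne_nil hu] at hs h₂
  obtain ⟨p, hp⟩ := exists_expand_inl_eq_of_append hd hu hfree hv hc (hs.resolve_left h₂)
    fun hv' => by
      subst hv'
      simp only [List.append_nil] at ht
      exact ht.resolve_left (by simp [hfree _ (List.getLast_mem hu)])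
  exact ⟨.inl p, v, by rw [hp], fun hv' => ⟨.inr (hv hv'), .inl (hv hv')⟩⟩

theorem exists_flatMap_expand_eq (hd : Disjoint G₁.verts G₂.verts)
    (l : List (UnionLetter G₁ G₂ G₃)) (hl : l ≠ []) (hc : l.IsChain (AltStep (union G₁ G₂) G₃))
    (hs : isG₂ (l.head hl) ∨ psrc (union G₁ G₂) G₃ (l.head hl) ∈ symmDiff G₁.verts G₃.verts)
    (ht : isG₂ (l.getLast hl) ∨
      ptgt (union G₁ G₂) G₃ (l.getLast hl) ∈ symmDiff G₁.verts G₃.verts) :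
    ∃ m : List (ReductLetter G₁ G₂ G₃),
      m.IsChain (AltStep (reduct G₁ G₃) G₂) ∧ m.flatMap expand = l := by
  obtain ⟨b, v, hbv, hv⟩ := exists_expand_append hd hl hc hs ht
  subst hbv
  rcases eq_or_ne v [] with rfl | hv'
  · exact ⟨[b], List.isChain_singleton b, by simp⟩
  rw [List.getLast_append_of_ne_nil _ hv'] at ht
  obtain ⟨m, hm, rfl⟩ :=
    exists_flatMap_expand_eq hd v hv' (hc.suffix (List.suffix_append _ _)) (hv hv').2 ht
  exact ⟨b :: m, isChain_cons_of_flatMap_expand hm (by simpa using hc) fun _ => (hv hv').1,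
    by simp⟩
termination_by l.length
decreasing_by
  rw [hbv, List.length_append]
  exact Nat.lt_add_of_pos_left (List.length_pos_iff.2 (expand_ne_nil b))

def AltPath.expand (hd : Disjoint G₁.verts G₂.verts) (p : AltPath (reduct G₁ G₃) G₂) :
    AltPath (union G₁ G₂) G₃ :=
  ⟨p.edges.flatMap EGraph.expand, flatMap_expand_ne_nil p.ne, isChain_flatMap_expand hd p.isChain⟩

theorem AltPath.src_expand (hd : Disjoint G₁.verts G₂.verts) (p : AltPath (reduct G₁ G₃) G₂) :
    (p.expand hd).src = p.src := by
  simp only [AltPath.src, AltPath.expand, head_flatMap_expand p.ne, psrc_head_expand]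

theorem AltPath.tgt_expand (hd : Disjoint G₁.verts G₂.verts) (p : AltPath (reduct G₁ G₃) G₂) :
    (p.expand hd).tgt = p.tgt := by
  simp only [AltPath.tgt, AltPath.expand, getLast_flatMap_expand p.ne, ptgt_getLast_expand]

theorem AltPath.weight_expand (hd : Disjoint G₁.verts G₂.verts) (p : AltPath (reduct G₁ G₃) G₂) :
    (p.expand hd).weight = p.weight :=
  prod_map_pw_flatMap_expand p.edges

theorem symmDiff_union_verts (hd : Disjoint G₁.verts G₂.verts) :
    symmDiff (G₁.verts ∪ G₂.verts) G₃.verts = symmDiff (symmDiff G₁.verts G₃.verts) G₂.verts := by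
  rw [← Finset.sup_eq_union, ← hd.symmDiff_eq_sup, symmDiff_right_comm]

theorem isG₂_or_psrc_mem_symmDiff {a : UnionLetter G₁ G₂ G₃}
    (h : psrc (union G₁ G₂) G₃ a ∈ symmDiff (G₁.verts ∪ G₂.verts) G₃.verts) :
    isG₂ a ∨ psrc (union G₁ G₂) G₃ a ∈ symmDiff G₁.verts G₃.verts := by
  cases ha : isG₂ a
  · have hv := psrc_mem_union_of_not_isG₂ ha
    simp only [Finset.mem_symmDiff, Finset.mem_union] at hv h ⊢
    tauto
  · exact .inl rfl

theorem isG₂_or_ptgt_mem_symmDiff {a : UnionLetter G₁ G₂ G₃}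
    (h : ptgt (union G₁ G₂) G₃ a ∈ symmDiff (G₁.verts ∪ G₂.verts) G₃.verts) :
    isG₂ a ∨ ptgt (union G₁ G₂) G₃ a ∈ symmDiff G₁.verts G₃.verts := by
  cases ha : isG₂ a
  · have hv := ptgt_mem_union_of_not_isG₂ ha
    simp only [Finset.mem_symmDiff, Finset.mem_union] at hv h ⊢
    tauto
  · exact .inl rfl

def expandEdge (hd : Disjoint G₁.verts G₂.verts) (q : (reduct (reduct G₁ G₃) G₂).E) :
    (reduct (union G₁ G₂) G₃).E :=
  ⟨q.1.expand hd, by rw [AltPath.src_expand, union, symmDiff_union_verts hd]; exact q.2.1,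
    by rw [AltPath.tgt_expand, union, symmDiff_union_verts hd]; exact q.2.2⟩

theorem expandEdge_bijective (hd : Disjoint G₁.verts G₂.verts) :
    Function.Bijective (expandEdge (G₃ := G₃) hd) := by
  refine ⟨fun q q' h => Subtype.ext <| AltPath.edges_injective <|
    flatMap_expand_injective q.1.isChain q'.1.isChain (congrArg (·.1.edges) h), ?_⟩
  rintro ⟨p, hs, ht⟩
  obtain ⟨m, hm, hmp⟩ := exists_flatMap_expand_eq hd p.edges p.ne p.isChain
    (isG₂_or_psrc_mem_symmDiff hs) (isG₂_or_ptgt_mem_symmDiff ht)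
  have hne : m ≠ [] := by rintro rfl; exact p.ne hmp.symm
  have hq : AltPath.expand hd ⟨m, hne, hm⟩ = p := AltPath.edges_injective hmp
  refine ⟨⟨⟨m, hne, hm⟩, ?_, ?_⟩, Subtype.ext hq⟩
  · show _ ∈ symmDiff (symmDiff G₁.verts G₃.verts) G₂.verts
    rw [← AltPath.src_expand hd, hq, ← symmDiff_union_verts hd]
    exact hs
  · show _ ∈ symmDiff (symmDiff G₁.verts G₃.verts) G₂.verts
    rw [← AltPath.tgt_expand hd, hq, ← symmDiff_union_verts hd]
    exact ht

theorem reduct_union_isIso (hd : Disjoint G₁.verts G₂.verts) :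
    (reduct (union G₁ G₂) G₃).IsIso (reduct (reduct G₁ G₃) G₂) :=
  IsIso.of_bijective (symmDiff_union_verts hd) (expandEdge hd) (expandEdge_bijective hd)
    (fun q => AltPath.src_expand hd q.1) (fun q => AltPath.tgt_expand hd q.1)
    (fun q => AltPath.weight_expand hd q.1)

def AltPath.lift (p : AltPath G₁ G₃) : AltPath (union G₁ G₂) G₃ :=
  ⟨p.edges.map liftLetter, by simpa using p.ne,
    (by simpa [List.isChain_map] using p.isChain :
      (p.edges.map liftLetter).IsChain (AltStep (union G₁ G₂) G₃))⟩

theorem AltPath.isCycle_lift_iff (p : AltPath G₁ G₃) :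
    (p.lift : AltPath (union G₁ G₂) G₃).IsCycle ↔ p.IsCycle := by
  rw [AltPath.isCycle_iff, AltPath.isCycle_iff, AltPath.lift, ← Cycle.map_coe, Cycle.chain_map]
  simp only [altStep_liftLetter_iff]

theorem AltPath.weight_lift (p : AltPath G₁ G₃) :
    (p.lift : AltPath (union G₁ G₂) G₃).weight = p.weight := by
  simp only [AltPath.weight, AltPath.lift, List.map_map]
  exact congrArg List.prod (List.map_congr_left fun c _ => pw_liftLetter c)

def liftOneCycle (s : {p : AltPath G₁ G₃ // p.IsOneCycle}) :
    {p : AltPath (union G₁ G₂) G₃ // p.IsOneCycle} :=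
  ⟨s.1.lift, (AltPath.isCycle_lift_iff s.1).2 s.2.1, s.2.2.map liftLetter_injective⟩

def expandOneCycle (hd : Disjoint G₁.verts G₂.verts)
    (s : {p : AltPath (reduct G₁ G₃) G₂ // p.IsOneCycle}) :
    {p : AltPath (union G₁ G₂) G₃ // p.IsOneCycle} :=
  have hc := (AltPath.isCycle_iff s.1).1 s.2.1
  ⟨s.1.expand hd, (AltPath.isCycle_iff _).2 (cycleChain_flatMap_expand hd hc),
    s.2.2.flatMap_expand s.1.ne hc⟩

def circLift : Circ G₁ G₃ → Circ (union G₁ G₂) G₃ :=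
  Quotient.map liftOneCycle fun _ _ ⟨k, hk⟩ =>
    ⟨k, by simp [liftOneCycle, AltPath.lift, hk, List.map_rotate]⟩

noncomputable def circExpand (hd : Disjoint G₁.verts G₂.verts) :
    Circ (reduct G₁ G₃) G₂ → Circ (union G₁ G₂) G₃ :=
  Quotient.map (expandOneCycle hd) fun s _ ⟨k, hk⟩ =>
    have ⟨j, hj⟩ := (List.IsRotated.flatMap ⟨k, hk.symm⟩ expand : s.1.edges.flatMap expand ~r _)
    ⟨j, hj.symm⟩

theorem cweight_circLift (c : Circ G₁ G₃) :
    cweight (circLift c : Circ (union G₁ G₂) G₃) = cweight c := by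
  induction c using Quotient.ind with
  | _ s => exact AltPath.weight_lift s.1

theorem cweight_circExpand (hd : Disjoint G₁.verts G₂.verts) (c : Circ (reduct G₁ G₃) G₂) :
    cweight (circExpand hd c) = cweight c := by
  induction c using Quotient.ind with
  | _ s => exact AltPath.weight_expand hd s.1

theorem circLift_injective :
    Function.Injective (circLift : Circ G₁ G₃ → Circ (union G₁ G₂) G₃) := by
  refine Quotient.ind₂ fun s t h => (circ_mk_eq_iff s t).2 ?_
  exact List.IsRotated.of_map liftLetter_injective ((circ_mk_eq_iff _ _).1 h)

theorem circExpand_injective (hd : Disjoint G₁.verts G₂.verts) :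
    Function.Injective (circExpand (G₃ := G₃) hd) := by
  refine Quotient.ind₂ fun s t h => (circ_mk_eq_iff s t).2 ?_
  replace h : s.1.edges.flatMap expand ~r t.1.edges.flatMap expand := (circ_mk_eq_iff _ _).1 h
  have hs := (AltPath.isCycle_iff s.1).1 s.2.1
  have ht := (AltPath.isCycle_iff t.1).1 t.2.1
  -- rotate `t` to start with a `G₂` edge, then align `s` with it
  obtain ⟨e, he⟩ := exists_inr_mem_of_cycleChain t.1.ne ht
  obtain ⟨t', htt'⟩ := List.exists_isRotated_cons_of_mem he
  obtain ⟨m, hsm, hm⟩ := exists_isRotated_flatMap_expand_eq (h.trans (htt'.flatMap expand))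
    fun _ => rfl
  have hm' : m.IsChain (AltStep (reduct G₁ G₃) G₂) :=
    ((Cycle.chain_coe_iff (by rintro rfl; simp at hm)).1 (Cycle.coe_eq_coe.2 hsm ▸ hs)).1
  have ht' : (.inr e :: t').IsChain (AltStep (reduct G₁ G₃) G₂) :=
    ((Cycle.chain_coe_iff (List.cons_ne_nil _ _)).1 (Cycle.coe_eq_coe.2 htt' ▸ ht)).1
  rw [flatMap_expand_injective hm' ht' hm] at hsm
  exact hsm.trans htt'.symm

theorem circLift_ne_circExpand (hd : Disjoint G₁.verts G₂.verts) (c₁ : Circ G₁ G₃)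
    (c₂ : Circ (reduct G₁ G₃) G₂) : circLift c₁ ≠ circExpand hd c₂ := by
  induction c₁ using Quotient.ind
  induction c₂ using Quotient.ind
  rename_i s₁ s₂
  intro h
  replace h : s₁.1.edges.map liftLetter ~r s₂.1.edges.flatMap expand := (circ_mk_eq_iff _ _).1 h
  obtain ⟨e, he⟩ := exists_inr_mem_of_cycleChain s₂.1.ne ((AltPath.isCycle_iff s₂.1).1 s₂.2.1)
  obtain ⟨c, -, hc⟩ := List.mem_map.1 <| h.mem_iff.2 <|
    List.mem_flatMap.2 ⟨_, he, List.mem_singleton_self (Sum.inl (Sum.inr e))⟩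
  have := congrArg isG₂ hc
  rw [isG₂_liftLetter] at this
  exact Bool.false_ne_true this

theorem cycleChain_of_flatMap_expand {m : List (ReductLetter G₁ G₂ G₃)}
    (hm : m.IsChain (AltStep (reduct G₁ G₃) G₂))
    (hc : Cycle.Chain (AltStep (union G₁ G₂) G₃) (m.flatMap expand : Cycle _))
    (hG₂ : ∀ hm : m ≠ [], isG₂ ((m.flatMap expand).head (flatMap_expand_ne_nil hm))) :
    Cycle.Chain (AltStep (reduct G₁ G₃) G₂) m := by
  rcases eq_or_ne m [] with rfl | hne
  · exact Cycle.Chain.nil _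
  rw [Cycle.chain_coe_iff (flatMap_expand_ne_nil hne), head_flatMap_expand hne,
    getLast_flatMap_expand hne] at hc
  have h := hG₂ hne
  rw [head_flatMap_expand hne] at h
  exact (Cycle.chain_coe_iff hne).2 ⟨hm, altStep_of_altStep_expand hc.2 (.inr h)⟩

theorem exists_circLift_eq (s : {p : AltPath (union G₁ G₂) G₃ // p.IsOneCycle})
    (h : ∀ a ∈ s.1.edges, isG₂ a = false) : ∃ c, circLift c = Quotient.mk _ s := by
  obtain ⟨r, hr⟩ := exists_map_liftLetter_eq h
  have hne : r ≠ [] := by rintro rfl; exact s.1.ne hr.symm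
  have hc : r.IsChain (AltStep G₁ G₃) := by simpa [← hr, List.isChain_map] using s.1.isChain
  have hp : (AltPath.lift ⟨r, hne, hc⟩ : AltPath (union G₁ G₂) G₃) = s.1 :=
    AltPath.edges_injective hr
  refine ⟨Quotient.mk _ ⟨⟨r, hne, hc⟩, (AltPath.isCycle_lift_iff _).1 (hp ▸ s.2.1),
    PrimitiveList.of_map (hr ▸ s.2.2)⟩, congrArg (Quotient.mk _) (Subtype.ext hp)⟩

theorem exists_circExpand_eq (hd : Disjoint G₁.verts G₂.verts)
    (s : {p : AltPath (union G₁ G₂) G₃ // p.IsOneCycle}) (h : ∃ a ∈ s.1.edges, isG₂ a) :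
    ∃ c, circExpand hd c = Quotient.mk _ s := by
  obtain ⟨a, ha, ha₂⟩ := h
  obtain ⟨t, hst⟩ := List.exists_isRotated_cons_of_mem ha
  have hc : Cycle.Chain (AltStep (union G₁ G₂) G₃) (a :: t) :=
    Cycle.coe_eq_coe.2 hst ▸ (AltPath.isCycle_iff s.1).1 s.2.1
  obtain ⟨hc₁, hc₂⟩ := (Cycle.chain_coe_iff (List.cons_ne_nil _ _)).1 hc
  obtain ⟨m, hm, hmt⟩ := exists_flatMap_expand_eq hd (a :: t) (List.cons_ne_nil _ _) hc₁
    (.inl ha₂) (.inr (altStep_isG₂_right hd hc₂ ha₂).2)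
  have hne : m ≠ [] := by rintro rfl; simp at hmt
  have hmc := cycleChain_of_flatMap_expand hm (by rw [hmt]; exact hc) fun _ => by
    simp only [hmt, List.head_cons]
    exact ha₂
  refine ⟨Quotient.mk _ ⟨⟨m, hne, hm⟩, (AltPath.isCycle_iff _).2 hmc,
    PrimitiveList.of_flatMap (hmt ▸ s.2.2.of_isRotated hst)⟩, ?_⟩
  refine (circ_mk_eq_iff _ _).2 ?_
  show m.flatMap expand ~r s.1.edges
  rw [hmt]
  exact hst.symm

theorem bijective_circLift_circExpand (hd : Disjoint G₁.verts G₂.verts) :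
    Function.Bijective (Sum.elim circLift (circExpand hd) :
      Circ G₁ G₃ ⊕ Circ (reduct G₁ G₃) G₂ → Circ (union G₁ G₂) G₃) := by
  refine ⟨circLift_injective.sumElim (circExpand_injective hd) (circLift_ne_circExpand hd),
    Quotient.ind fun s => ?_⟩
  by_cases h : ∃ a ∈ s.1.edges, isG₂ a
  · obtain ⟨c, hc⟩ := exists_circExpand_eq hd s h
    exact ⟨.inr c, hc⟩
  · obtain ⟨c, hc⟩ := exists_circLift_eq s (by simpa using h)
    exact ⟨.inl c, hc⟩

theorem meas_union_eq (hd : Disjoint G₁.verts G₂.verts) :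
    meas (union G₁ G₂) G₃ = meas G₁ G₃ + meas (reduct G₁ G₃) G₂ := by
  rw [meas, ← (Equiv.ofBijective _ (bijective_circLift_circExpand hd)).tsum_eq,
    Summable.tsum_sum ENNReal.summable ENNReal.summable]
  simp [meas, cweight_circLift, cweight_circExpand]

end ThreeGraphs

end EGraph

open EGraph in
theorem stmt15_general {V : Type} [DecidableEq V] (a₁ a₂ a₃ : Project V)
    (h12 : a₁.carrier ∩ a₂.carrier = ∅) :
    ((a₁.tensor a₂).cut a₃).Equiv ((a₁.cut a₃).cut a₂) ∧
    ((a₁.tensor a₂).cut a₃).wager =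
      a₁.wager + a₂.wager + a₃.wager + meas a₁.graph a₃.graph +
        meas (reduct a₁.graph a₃.graph) a₂.graph := by
  have hd : Disjoint a₁.graph.verts a₂.graph.verts := Finset.disjoint_iff_inter_eq_empty.2 h12
  have hw : ((a₁.tensor a₂).cut a₃).wager =
      a₁.wager + a₂.wager + a₃.wager + meas a₁.graph a₃.graph +
        meas (reduct a₁.graph a₃.graph) a₂.graph := by
    show a₁.wager + a₂.wager + meas a₁.graph a₂.graph + a₃.wager +
      meas (union a₁.graph a₂.graph) a₃.graph = _
    rw [meas_eq_zero_of_disjoint hd, meas_union_eq hd]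
    ring
  refine ⟨⟨hw.trans ?_, reduct_union_isIso hd⟩, hw⟩
  show _ = a₁.wager + a₃.wager + meas a₁.graph a₃.graph + a₂.wager +
    meas (reduct a₁.graph a₃.graph) a₂.graph
  ring

open EGraph in
/-- Associativity of the cut on projects: if the three carriers have empty
intersection and all cuts are defined, then `(a₁ ⊗ a₂) ∷ a₃ = (a₁ ∷ a₃) ∷ a₂`, both
sides having underlying graph `(A₁ ∪ A₂) ∷ A₃ = (A₁ ∷ A₃) ∷ A₂` and wager
`a₁ + a₂ + a₃ + ⟪A₁,A₃⟫ + ⟪A₁ ∷ A₃, A₂⟫`. -/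
theorem stmt15 {V : Type} [DecidableEq V] (a₁ a₂ a₃ : Project V)
    (h12 : a₁.carrier ∩ a₂.carrier = ∅)
    (h123 : a₁.carrier ∩ a₂.carrier ∩ a₃.carrier = ∅)
    (hd1 : pmeas (a₁.tensor a₂) a₃ ≠ ⊤) (hd2 : pmeas a₁ a₃ ≠ ⊤)
    (hd3 : pmeas (a₁.cut a₃) a₂ ≠ ⊤) :
    ((a₁.tensor a₂).cut a₃).Equiv ((a₁.cut a₃).cut a₂) ∧
    ((a₁.tensor a₂).cut a₃).wager =
      a₁.wager + a₂.wager + a₃.wager + meas a₁.graph a₃.graph +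
        meas (reduct a₁.graph a₃.graph) a₂.graph :=
  stmt15_general a₁ a₂ a₃ h12
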